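/- Let \Gamma be an imbrex geometry of symplectic rank 2 and let \Delta be the generalized quadrangle whose points are the points of \Gamma and whose lines are the maximal singular subspaces of \Gamma. Then every symplecton of \Gamma is an ideal subquadrangle of \Delta: for every point x of a symplecton H, every block of \Delta through x meets H in a line of H. -/
import Mathlib


namespace ImbrexGeom

variable {P : Type*}

/-- Two points are collinear: equal or on a common line. -/
def Col (Ls : Set (Set P)) (x y : P) : Prop :=
  x = y ∨ ∃ L ∈ Ls, x ∈ L ∧ y ∈ L

/-- A line of the geometry induced on a subset `S`. -/
def LineIn (Ls : Set (Set P)) (S : Set P) (L : Set P) : Prop :=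
  L ∈ Ls ∧ L ⊆ S

/-- Collinearity inside the geometry induced on `S`. -/
def ColIn (Ls : Set (Set P)) (S : Set P) (x y : P) : Prop :=
  x = y ∨ ∃ L, LineIn Ls S L ∧ x ∈ L ∧ y ∈ L

/-- A subspace of the geometry induced on `S`. -/
def IsSubspaceIn (Ls : Set (Set P)) (S T : Set P) : Prop :=
  T ⊆ S ∧ ∀ L, LineIn Ls S L → ∀ x ∈ L, ∀ y ∈ L, x ≠ y → x ∈ T → y ∈ T → L ⊆ T

def IsSubspace (Ls : Set (Set P)) (T : Set P) : Prop :=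
  IsSubspaceIn Ls Set.univ T

/-- A convex subspace (adapted to diameter 2): closed under taking common
neighbours of non-collinear pairs, i.e. all points on shortest paths. -/
def IsConvex (Ls : Set (Set P)) (S : Set P) : Prop :=
  IsSubspace Ls S ∧ ∀ x ∈ S, ∀ y ∈ S, ¬ Col Ls x y →
    ∀ z, Col Ls x z → Col Ls z y → z ∈ S

/-- `S` is the smallest convex subspace containing `x` and `y`. -/
def SmallestConvex (Ls : Set (Set P)) (x y : P) (S : Set P) : Prop :=
  IsConvex Ls S ∧ x ∈ S ∧ y ∈ S ∧
    ∀ S', IsConvex Ls S' → x ∈ S' → y ∈ S' → S ⊆ S'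

/-- A singular subspace of the geometry induced on `S`. -/
def IsSingularIn (Ls : Set (Set P)) (S T : Set P) : Prop :=
  IsSubspaceIn Ls S T ∧ ∀ x ∈ T, ∀ y ∈ T, ColIn Ls S x y

def IsSingular (Ls : Set (Set P)) (T : Set P) : Prop :=
  IsSingularIn Ls Set.univ T

/-- A maximal singular subspace of the geometry induced on `S`. -/
def MaxSingularIn (Ls : Set (Set P)) (S T : Set P) : Prop :=
  IsSingularIn Ls S T ∧ ∀ T', IsSingularIn Ls S T' → T ⊆ T' → T' = T

/-- A block: a maximal singular subspace of the whole geometry. -/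
def IsBlock (Ls : Set (Set P)) (B : Set P) : Prop :=
  MaxSingularIn Ls Set.univ B

/-- The geometry induced on `S` has polar rank `r`: every nested (strictly
increasing) sequence of singular subspaces has length at most `r + 1`, and
one of length `r + 1` exists. -/
def HasPolarRank (Ls : Set (Set P)) (S : Set P) (r : ℕ) : Prop :=
  (∀ n : ℕ, ∀ f : Fin n → Set P, (∀ i, IsSingularIn Ls S (f i)) →
      (∀ i j, i < j → f i ⊂ f j) → n ≤ r + 1) ∧
  ∃ f : Fin (r + 1) → Set P, (∀ i, IsSingularIn Ls S (f i)) ∧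
      ∀ i j : Fin (r + 1), i < j → f i ⊂ f j

/-- The geometry induced on `S` is a polar space of rank `r`
(Buekenhout–Shult axioms). -/
def IsPolarSpace (Ls : Set (Set P)) (S : Set P) (r : ℕ) : Prop :=
  (∀ L, LineIn Ls S L → ∃ x ∈ L, ∃ y ∈ L, ∃ z ∈ L, x ≠ y ∧ x ≠ z ∧ y ≠ z) ∧
  (∀ x ∈ S, ∃ y ∈ S, ¬ ColIn Ls S x y) ∧
  HasPolarRank Ls S r ∧
  (∀ x ∈ S, ∀ L, LineIn Ls S L → x ∉ L →
      (∃! y, y ∈ L ∧ ColIn Ls S x y) ∨ ∀ y ∈ L, ColIn Ls S x y)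

/-- A strong parapolar space of diameter 2. -/
structure StrongParapolar2 (Ls : Set (Set P)) : Prop where
  connected : ∀ x y : P, Relation.ReflTransGen (Col Ls) x y
  pps1 : ∀ x : P, ∀ L ∈ Ls, x ∉ L →
      (∀ y ∈ L, ¬ Col Ls x y) ∨ (∃! y, y ∈ L ∧ Col Ls x y) ∨ ∀ y ∈ L, Col Ls x y
  pps1_none : ∃ x : P, ∃ L ∈ Ls, ∀ y ∈ L, ¬ Col Ls x y
  pps1_one : ∃ x : P, ∃ L ∈ Ls, x ∉ L ∧ ∃! y, y ∈ L ∧ Col Ls x y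
  pps1_all : ∃ x : P, ∃ L ∈ Ls, x ∉ L ∧ ∀ y ∈ L, Col Ls x y
  pps2 : ∀ x y : P, ¬ Col Ls x y →
      ∃ S, SmallestConvex Ls x y S ∧ ∃ r, 2 ≤ r ∧ IsPolarSpace Ls S r

/-- A symplecton: the smallest convex subspace of a non-collinear pair. -/
def IsSymp (Ls : Set (Set P)) (S : Set P) : Prop :=
  ∃ x y, ¬ Col Ls x y ∧ SmallestConvex Ls x y S

/-- (PPS4): every nested sequence of singular subspaces has finite length. -/
def PPS4 (Ls : Set (Set P)) : Prop :=
  ∀ f : ℕ → Set P, (∀ n, IsSingular Ls (f n)) → ¬ ∀ n, f n ⊂ f (n + 1)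

/-- The imbrex axiom (Imb). -/
def Imb (Ls : Set (Set P)) : Prop :=
  ∀ x : P, ∀ L ∈ Ls, (∀ y ∈ L, ¬ Col Ls x y) →
    ∀ y₁ ∈ L, ∀ y₂ ∈ L, y₁ ≠ y₂ →
      ∀ S₁ S₂, SmallestConvex Ls x y₁ S₁ → SmallestConvex Ls x y₂ S₂ →
        MaxSingularIn Ls S₁ (S₁ ∩ S₂) ∧ MaxSingularIn Ls S₂ (S₁ ∩ S₂)

/-- An imbrex geometry. -/
structure ImbrexGeometry (Ls : Set (Set P)) : Prop where
  spp : StrongParapolar2 Ls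
  pps4 : PPS4 Ls
  imb : Imb Ls

/-- The geometry has symplectic rank `r`: all symplecta have polar rank `r`. -/
def SympRank (Ls : Set (Set P)) (r : ℕ) : Prop :=
  ∀ S, IsSymp Ls S → HasPolarRank Ls S r

/-- All symplecta are thick generalized quadrangles: every point of a
symplecton lies on at least three lines of it (lines already have at least
three points by the polar space axioms). -/
def ThickSymps (Ls : Set (Set P)) : Prop :=
  ∀ S, IsSymp Ls S → ∀ x ∈ S, ∃ L₁ L₂ L₃, LineIn Ls S L₁ ∧ LineIn Ls S L₂ ∧
    LineIn Ls S L₃ ∧ L₁ ≠ L₂ ∧ L₁ ≠ L₃ ∧ L₂ ≠ L₃ ∧ x ∈ L₁ ∧ x ∈ L₂ ∧ x ∈ L₃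

/-- The perp of a set of lines in the geometry induced on `S`: all lines of
`S` concurrent with every member of the set. -/
def PerpSet (Ls : Set (Set P)) (S : Set P) (T : Set (Set P)) : Set (Set P) :=
  {N | LineIn Ls S N ∧ ∀ M ∈ T, (N ∩ M).Nonempty}

/-- A pair of lines is regular. -/
def RegularPair (Ls : Set (Set P)) (S : Set P) (L M : Set P) : Prop :=
  ∃ L' M', L' ∈ PerpSet Ls S {L, M} ∧ M' ∈ PerpSet Ls S {L, M} ∧ L' ≠ M' ∧
    PerpSet Ls S (PerpSet Ls S {L, M}) = PerpSet Ls S {L', M'}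

/-- `N` is a member of the spread of the symplecton `H` induced by the
block `B`: `N = B' ∩ H` for some block `B'` meeting `B`. -/
def InSpreadOf (Ls : Set (Set P)) (H B : Set P) (N : Set P) : Prop :=
  ∃ B', IsBlock Ls B' ∧ (B' ∩ B).Nonempty ∧ N = B' ∩ H

/-! ### Basic lemmas -/

variable {Ls : Set (Set P)}

theorem col_refl (Ls : Set (Set P)) (x : P) : Col Ls x x := Or.inl rfl

theorem col_symm {x y : P} (h : Col Ls x y) : Col Ls y x := by
  rcases h with rfl | ⟨L, hL, hx, hy⟩
  · exact Or.inl rfl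
  · exact Or.inr ⟨L, hL, hy, hx⟩

theorem col_of_colIn {S : Set P} {x y : P} (h : ColIn Ls S x y) : Col Ls x y := by
  rcases h with rfl | ⟨L, ⟨hL, _⟩, hx, hy⟩
  · exact Or.inl rfl
  · exact Or.inr ⟨L, hL, hx, hy⟩

theorem line_subset {T : Set P} (hT : IsSubspace Ls T) {L : Set P} (hL : L ∈ Ls)
    {x y : P} (hx : x ∈ L) (hy : y ∈ L) (hxy : x ≠ y) (hxT : x ∈ T) (hyT : y ∈ T) :
    L ⊆ T :=
  hT.2 L ⟨hL, Set.subset_univ L⟩ x hx y hy hxy hxT hyT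

/-- In a (global) subspace, `Col` implies `ColIn`. -/
theorem colIn_of_col {S : Set P} (hS : IsSubspace Ls S) {x y : P}
    (hx : x ∈ S) (hy : y ∈ S) (h : Col Ls x y) : ColIn Ls S x y := by
  rcases h with rfl | ⟨L, hL, hxL, hyL⟩
  · exact Or.inl rfl
  · rcases eq_or_ne x y with rfl | hne
    · exact Or.inl rfl
    · exact Or.inr ⟨L, ⟨hL, line_subset hS hL hxL hyL hne hx hy⟩, hxL, hyL⟩

/-- A `Col` between distinct points of a subspace gives a line inside it. -/
theorem exists_line_of_col {S : Set P} (hS : IsSubspace Ls S) {x y : P}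
    (hx : x ∈ S) (hy : y ∈ S) (hxy : x ≠ y) (h : Col Ls x y) :
    ∃ L, LineIn Ls S L ∧ x ∈ L ∧ y ∈ L := by
  rcases h with rfl | ⟨L, hL, hxL, hyL⟩
  · exact absurd rfl hxy
  · exact ⟨L, ⟨hL, line_subset hS hL hxL hyL hxy hx hy⟩, hxL, hyL⟩

/-- Γ-singularity restricted to a subspace gives singularity-in. -/
theorem singularIn_of_singular {S T : Set P} (hS : IsSubspace Ls S)
    (hT : IsSingular Ls T) (hTS : T ⊆ S) : IsSingularIn Ls S T := by
  refine ⟨⟨hTS, ?_⟩, ?_⟩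
  · intro L hL x hx y hy hxy hxT hyT
    exact hT.1.2 L ⟨hL.1, Set.subset_univ L⟩ x hx y hy hxy hxT hyT
  · intro x hx y hy
    exact colIn_of_col hS (hTS hx) (hTS hy) (col_of_colIn (hT.2 x hx y hy))

/-- Singularity-in a subspace gives Γ-singularity. -/
theorem singular_of_singularIn {S T : Set P} (hS : IsSubspace Ls S)
    (hT : IsSingularIn Ls S T) : IsSingular Ls T := by
  refine ⟨⟨Set.subset_univ T, ?_⟩, ?_⟩
  · intro L hL x hx y hy hxy hxT hyT
    have hLS : L ⊆ S := line_subset hS hL.1 hx hy hxy (hT.1.1 hxT) (hT.1.1 hyT)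
    exact hT.1.2 L ⟨hL.1, hLS⟩ x hx y hy hxy hxT hyT
  · intro x hx y hy
    rcases hT.2 x hx y hy with rfl | ⟨L, hL, hxL, hyL⟩
    · exact Or.inl rfl
    · exact Or.inr ⟨L, ⟨hL.1, Set.subset_univ L⟩, hxL, hyL⟩

/-- The perp of a point. -/
def perp (Ls : Set (Set P)) (w : P) : Set P := {t | Col Ls w t}

theorem mem_perp_self (Ls : Set (Set P)) (w : P) : w ∈ perp Ls w := col_refl Ls w

/-- From PPS1: two distinct collinear points on a line force collinearity with the whole line. -/
theorem col_line_of_two (hpp : StrongParapolar2 Ls) {w : P} {L : Set P} (hL : L ∈ Ls)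
    {u v : P} (hu : u ∈ L) (hv : v ∈ L) (huv : u ≠ v)
    (hwu : Col Ls w u) (hwv : Col Ls w v) : ∀ t ∈ L, Col Ls w t := by
  by_cases hwL : w ∈ L
  · intro t ht; exact Or.inr ⟨L, hL, hwL, ht⟩
  rcases hpp.pps1 w L hL hwL with hnone | hone | hall
  · exact absurd hwu (hnone u hu)
  · exact absurd (hone.unique ⟨hu, hwu⟩ ⟨hv, hwv⟩) huv
  · exact hall

/-- Perps are subspaces (via PPS1). -/
theorem perp_isSubspace (hpp : StrongParapolar2 Ls) (w : P) :
    IsSubspace Ls (perp Ls w) := by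
  refine ⟨Set.subset_univ _, ?_⟩
  intro L hL x hx y hy hxy hxT hyT t ht
  exact col_line_of_two hpp hL.1 hx hy hxy hxT hyT t ht

/-! ### Spans -/

def Cl (Ls : Set (Set P)) (A : Set P) : Set P :=
  ⋂₀ {T | IsSubspace Ls T ∧ A ⊆ T}

theorem subset_cl (Ls : Set (Set P)) (A : Set P) : A ⊆ Cl Ls A := by
  intro a ha T hT; exact hT.2 ha

theorem cl_subset {A T : Set P} (hT : IsSubspace Ls T) (hAT : A ⊆ T) :
    Cl Ls A ⊆ T := fun _ hx => hx T ⟨hT, hAT⟩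

theorem cl_isSubspace (Ls : Set (Set P)) (A : Set P) : IsSubspace Ls (Cl Ls A) := by
  refine ⟨Set.subset_univ _, ?_⟩
  intro L hL x hx y hy hxy hxT hyT t ht T hT
  exact hT.1.2 L ⟨hL.1, Set.subset_univ L⟩ x hx y hy hxy (hxT T hT) (hyT T hT) ht

def Clique (Ls : Set (Set P)) (A : Set P) : Prop :=
  ∀ a ∈ A, ∀ b ∈ A, Col Ls a b

/-- The span of a clique is singular. -/
theorem clique_cl_singular (hpp : StrongParapolar2 Ls) {A : Set P}
    (hA : Clique Ls A) : IsSingular Ls (Cl Ls A) := by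
  have hcl : ∀ a ∈ Cl Ls A, ∀ b ∈ Cl Ls A, Col Ls a b := by
    -- D-trick
    set D : Set P := {z | z ∈ Cl Ls A ∧ ∀ c ∈ Cl Ls A, Col Ls z c} with hD
    have hAD : A ⊆ D := by
      intro a ha
      refine ⟨subset_cl Ls A ha, ?_⟩
      intro c hc
      have : Cl Ls A ⊆ perp Ls a := cl_subset (perp_isSubspace hpp a) (fun b hb => hA a ha b hb)
      exact this hc
    have hDsub : IsSubspace Ls D := by
      refine ⟨Set.subset_univ _, ?_⟩
      intro L hL p hp q hq hpq hpD hqD t ht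
      have hLcl : L ⊆ Cl Ls A :=
        (cl_isSubspace Ls A).2 L hL p hp q hq hpq hpD.1 hqD.1
      refine ⟨hLcl ht, ?_⟩
      intro c hc
      have hcp : Col Ls c p := col_symm (hpD.2 c hc)
      have hcq : Col Ls c q := col_symm (hqD.2 c hc)
      exact col_symm (col_line_of_two hpp hL.1 hp hq hpq hcp hcq t ht)
    have : Cl Ls A ⊆ D := cl_subset hDsub hAD
    intro a ha b hb
    exact (this ha).2 b hb
  refine ⟨cl_isSubspace Ls A, ?_⟩
  intro x hx y hy
  rcases eq_or_ne x y with rfl | hne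
  · exact Or.inl rfl
  · rcases hcl x hx y hy with rfl | ⟨L, hL, h1, h2⟩
    · exact Or.inl rfl
    · exact Or.inr ⟨L, ⟨hL, Set.subset_univ L⟩, h1, h2⟩

theorem pair_clique {x y : P} (h : Col Ls x y) : Clique Ls {x, y} := by
  intro a ha b hb
  simp only [Set.mem_insert_iff, Set.mem_singleton_iff] at ha hb
  rcases ha with rfl | rfl <;> rcases hb with rfl | rfl
  · exact col_refl Ls _
  · exact h
  · exact col_symm h
  · exact col_refl Ls _

theorem triple_clique {x y z : P} (hxy : Col Ls x y) (hxz : Col Ls x z)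
    (hyz : Col Ls y z) : Clique Ls {x, y, z} := by
  intro a ha b hb
  simp only [Set.mem_insert_iff, Set.mem_singleton_iff] at ha hb
  rcases ha with rfl | rfl | rfl <;> rcases hb with rfl | rfl | rfl
  all_goals first
    | exact col_refl Ls _
    | exact hxy | exact col_symm hxy | exact hxz | exact col_symm hxz
    | exact hyz | exact col_symm hyz

/-! ### Symplecta -/

theorem smallestConvex_unique {x y : P} {S S' : Set P}
    (h : SmallestConvex Ls x y S) (h' : SmallestConvex Ls x y S') : S = S' :=
  Set.Subset.antisymm (h.2.2.2 S' h'.1 h'.2.1 h'.2.2.1)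
    (h'.2.2.2 S h.1 h.2.1 h.2.2.1)

/-- Existence of the symplecton on a non-collinear pair. -/
theorem exists_symp (hpp : StrongParapolar2 Ls) {x y : P} (h : ¬ Col Ls x y) :
    ∃ S, SmallestConvex Ls x y S ∧ IsSymp Ls S ∧ ∃ r, 2 ≤ r ∧ IsPolarSpace Ls S r := by
  obtain ⟨S, hS, r, hr, hps⟩ := hpp.pps2 x y h
  exact ⟨S, hS, ⟨x, y, h, hS⟩, r, hr, hps⟩

/-- A symplecton is a polar space (of some rank `≥ 2`). -/
theorem symp_polar (hpp : StrongParapolar2 Ls) {S : Set P} (hS : IsSymp Ls S) :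
    ∃ r, 2 ≤ r ∧ IsPolarSpace Ls S r := by
  obtain ⟨x, y, hxy, hsc⟩ := hS
  obtain ⟨S', hsc', _, r, hr, hps⟩ := exists_symp hpp hxy
  rw [smallestConvex_unique hsc hsc']
  exact ⟨r, hr, hps⟩

theorem symp_isSubspace {S : Set P} (hS : IsSymp Ls S) : IsSubspace Ls S := by
  obtain ⟨x, y, _, hsc⟩ := hS
  exact hsc.1.1

/-- A common neighbour of the two defining points of a convex set lies inside. -/
theorem convex_mem {S : Set P} {x y : P} (hS : IsConvex Ls S) (hx : x ∈ S) (hy : y ∈ S)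
    (hxy : ¬ Col Ls x y) {z : P} (hxz : Col Ls x z) (hzy : Col Ls z y) : z ∈ S :=
  hS.2 x hx y hy hxy z hxz hzy

/-- thickness of lines inside a symplecton -/
theorem symp_thick (hpp : StrongParapolar2 Ls) {S : Set P} (hS : IsSymp Ls S)
    {L : Set P} (hL : LineIn Ls S L) :
    ∃ x ∈ L, ∃ y ∈ L, ∃ z ∈ L, x ≠ y ∧ x ≠ z ∧ y ≠ z := by
  obtain ⟨r, _, hps⟩ := symp_polar hpp hS
  exact hps.1 L hL

theorem symp_nondeg (hpp : StrongParapolar2 Ls) {S : Set P} (hS : IsSymp Ls S)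
    {x : P} (hx : x ∈ S) : ∃ y ∈ S, ¬ ColIn Ls S x y := by
  obtain ⟨r, _, hps⟩ := symp_polar hpp hS
  exact hps.2.1 x hx

/-- one-or-all inside a symplecton -/
theorem symp_BS (hpp : StrongParapolar2 Ls) {S : Set P} (hS : IsSymp Ls S)
    {x : P} (hx : x ∈ S) {L : Set P} (hL : LineIn Ls S L) (hxL : x ∉ L) :
    (∃! y, y ∈ L ∧ ColIn Ls S x y) ∨ ∀ y ∈ L, ColIn Ls S x y := by
  obtain ⟨r, _, hps⟩ := symp_polar hpp hS
  exact hps.2.2.2 x hx L hL hxL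

/-- Existence of a neighbour of `x` on a line of a symplecton. -/
theorem symp_exists_nbr (hpp : StrongParapolar2 Ls) {S : Set P} (hS : IsSymp Ls S)
    {x : P} (hx : x ∈ S) {L : Set P} (hL : LineIn Ls S L) :
    ∃ y ∈ L, Col Ls x y := by
  by_cases hxL : x ∈ L
  · exact ⟨x, hxL, col_refl Ls x⟩
  rcases symp_BS hpp hS hx hL hxL with ⟨y, ⟨hyL, hy⟩, _⟩ | hall
  · exact ⟨y, hyL, col_of_colIn hy⟩
  · obtain ⟨a, ha, _⟩ := symp_thick hpp hS hL
    exact ⟨a, ha, col_of_colIn (hall a ha)⟩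

/-- In a symplecton, `¬ ColIn` of distinct points gives `¬ Col`. -/
theorem not_col_of_not_colIn {S : Set P} (hS : IsSubspace Ls S) {x y : P}
    (hx : x ∈ S) (hy : y ∈ S) (h : ¬ ColIn Ls S x y) : ¬ Col Ls x y := by
  intro hcol
  exact h (colIn_of_col hS hx hy hcol)

/-- The chain-length bound in a symplecton of symplectic rank 2. -/
theorem symp_bound (hrk : SympRank Ls 2) {S : Set P} (hS : IsSymp Ls S)
    {A B C D : Set P} (hA : IsSingularIn Ls S A) (hB : IsSingularIn Ls S B)
    (hC : IsSingularIn Ls S C) (hD : IsSingularIn Ls S D)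
    (hAB : A ⊂ B) (hBC : B ⊂ C) (hCD : C ⊂ D) : False := by
  have hb := (hrk S hS).1
  set f : Fin 4 → Set P :=
    fun i => if i.val = 0 then A else if i.val = 1 then B else if i.val = 2 then C else D
    with hf
  have hsing : ∀ i, IsSingularIn Ls S (f i) := by
    rintro ⟨iv, hlt⟩
    interval_cases iv <;> simp [hf] <;> assumption
  have hmono : ∀ i j : Fin 4, i < j → f i ⊂ f j := by
    have hAC : A ⊂ C := hAB.trans hBC
    have hAD : A ⊂ D := hAC.trans hCD
    have hBD : B ⊂ D := hBC.trans hCD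
    rintro ⟨iv, hi⟩ ⟨jv, hj⟩ hij
    simp only [Fin.mk_lt_mk] at hij
    interval_cases iv <;> interval_cases jv <;> simp [hf] <;> first | omega | assumption
  have := hb 4 f hsing hmono
  omega

theorem empty_singularIn (Ls : Set (Set P)) (S : Set P) : IsSingularIn Ls S (∅ : Set P) := by
  refine ⟨⟨Set.empty_subset S, ?_⟩, ?_⟩
  · intro L hL x hx y hy hxy hxT; exact absurd hxT (Set.notMem_empty x)
  · intro x hx; exact absurd hx (Set.notMem_empty x)

theorem singleton_singularIn {S : Set P} {u : P} (hu : u ∈ S) :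
    IsSingularIn Ls S ({u} : Set P) := by
  refine ⟨⟨by simpa using hu, ?_⟩, ?_⟩
  · intro L hL x hx y hy hxy hxT hyT
    rcases hxT with rfl
    rcases hyT with rfl
    exact absurd rfl hxy
  · intro x hx y hy
    rcases hx with rfl; rcases hy with rfl
    exact Or.inl rfl

/-- 2-generation: in a rank-2 symplecton, a singular subspace containing two
distinct points is their span. -/
theorem two_gen (hpp : StrongParapolar2 Ls) (hrk : SympRank Ls 2) {S : Set P}
    (hS : IsSymp Ls S) {D : Set P} (hD : IsSingularIn Ls S D) {u v : P}
    (huv : u ≠ v) (hu : u ∈ D) (hv : v ∈ D) : D = Cl Ls {u, v} := by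
  have hSsub := symp_isSubspace hS
  have hDΓ : IsSingular Ls D := singular_of_singularIn hSsub hD
  have hpair : ({u, v} : Set P) ⊆ D := by
    intro a ha; rcases ha with rfl | ha
    · exact hu
    · rcases ha with rfl; exact hv
  have hclD : Cl Ls {u, v} ⊆ D := cl_subset hDΓ.1 hpair
  have hcluv : Col Ls u v := col_of_colIn (hD.2 u hu v hv)
  have hclsing : IsSingularIn Ls S (Cl Ls {u, v}) :=
    singularIn_of_singular hSsub (clique_cl_singular hpp (pair_clique hcluv))
      (hclD.trans hD.1.1)
  by_contra hne
  have h1 : (∅ : Set P) ⊂ {u} := by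
    simp [Set.ssubset_iff_of_subset (Set.empty_subset _)]
  have h2 : ({u} : Set P) ⊂ Cl Ls {u, v} := by
    constructor
    · intro a ha; rcases ha with rfl; exact subset_cl Ls _ (Or.inl rfl)
    · intro hcon
      exact huv (Eq.symm (hcon (subset_cl Ls {u,v} (Or.inr rfl))))
  have h3 : Cl Ls {u, v} ⊂ D := ⟨hclD, fun hcon => hne (Set.Subset.antisymm hcon hclD)⟩
  exact symp_bound hrk hS (empty_singularIn Ls S) (singleton_singularIn (hD.1.1 hu))
    hclsing hD h1 h2 h3

/-- Some line exists inside a symplecton. -/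
theorem symp_exists_line (hrk : SympRank Ls 2) {S : Set P} (hS : IsSymp Ls S) :
    ∃ L, LineIn Ls S L := by
  obtain ⟨f, hfsing, hfmono⟩ := (hrk S hS).2
  have h01 : f 0 ⊂ f 1 := hfmono 0 1 (by decide)
  have h12 : f 1 ⊂ f 2 := hfmono 1 2 (by decide)
  obtain ⟨a, ha1, ha0⟩ := Set.exists_of_ssubset h01
  obtain ⟨b, hb2, hb1⟩ := Set.exists_of_ssubset h12
  have hab : a ≠ b := fun h => hb1 (h ▸ ha1)
  have := (hfsing 2).2 a (h12.1 ha1) b hb2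
  rcases this with rfl | ⟨L, hL, _⟩
  · exact absurd rfl hab
  · exact ⟨L, hL⟩

/-- Every point of a symplecton lies on a line of it, together with a second point. -/
theorem exists_line_through (hpp : StrongParapolar2 Ls) (hrk : SympRank Ls 2)
    {S : Set P} (hS : IsSymp Ls S) {s : P} (hs : s ∈ S) :
    ∃ L, LineIn Ls S L ∧ s ∈ L ∧ ∃ u ∈ L, u ≠ s := by
  obtain ⟨M, hM⟩ := symp_exists_line hrk hS
  by_cases hsM : s ∈ M
  · obtain ⟨x, hx, y, hy, z, hz, hxy, hxz, hyz⟩ := symp_thick hpp hS hM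
    rcases eq_or_ne x s with rfl | hxs
    · exact ⟨M, hM, hsM, y, hy, fun h => hxy h.symm⟩
    · exact ⟨M, hM, hsM, x, hx, hxs⟩
  · obtain ⟨m, hmM, hsm⟩ := symp_exists_nbr hpp hS hs hM
    have hms : m ≠ s := fun h => hsM (h ▸ hmM)
    obtain ⟨L, hL, hsL, hmL⟩ :=
      exists_line_of_col (symp_isSubspace hS) hs (hM.2 hmM) (Ne.symm hms) hsm
    exact ⟨L, ⟨hL.1, fun t ht => hL.2 ht⟩, hsL, m, hmL, hms⟩

theorem subspace_inter {T₁ T₂ : Set P} (h₁ : IsSubspace Ls T₁) (h₂ : IsSubspace Ls T₂) :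
    IsSubspace Ls (T₁ ∩ T₂) := by
  refine ⟨Set.subset_univ _, ?_⟩
  intro L hL x hx y hy hxy hxT hyT
  exact Set.subset_inter (h₁.2 L hL x hx y hy hxy hxT.1 hyT.1)
    (h₂.2 L hL x hx y hy hxy hxT.2 hyT.2)

theorem colIn_univ_of_col {x y : P} (h : Col Ls x y) : ColIn Ls Set.univ x y := by
  rcases h with rfl | ⟨L, hL, hx, hy⟩
  · exact Or.inl rfl
  · exact Or.inr ⟨L, ⟨hL, Set.subset_univ L⟩, hx, hy⟩

theorem singular_of_clique_subspace {T : Set P} (hT : IsSubspace Ls T)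
    (hc : Clique Ls T) : IsSingular Ls T :=
  ⟨hT, fun x hx y hy => colIn_univ_of_col (hc x hx y hy)⟩

/-- **Partial linearity**: in a rank-2 symplecton the span of two distinct
collinear points is a line. -/
theorem cl_pair_mem_lines (hpp : StrongParapolar2 Ls) (hrk : SympRank Ls 2)
    {S : Set P} (hS : IsSymp Ls S) {u v : P} (hu : u ∈ S) (hv : v ∈ S)
    (huv : u ≠ v) (hcol : Col Ls u v) : Cl Ls {u, v} ∈ Ls := by
  classical
  have hSs := symp_isSubspace hS
  obtain ⟨L₀, hL₀, huL₀, hvL₀⟩ := exists_line_of_col hSs hu hv huv hcol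
  set C := Cl Ls {u, v} with hCdef
  have hpairC : ({u, v} : Set P) ⊆ C := subset_cl Ls _
  have hCsub : IsSubspace Ls C := cl_isSubspace Ls _
  have hCS : C ⊆ S := cl_subset hSs (by
    intro a ha; rcases ha with rfl | ha
    · exact hu
    · rcases ha with rfl; exact hv)
  have hL₀C : L₀ ⊆ C :=
    line_subset hCsub hL₀.1 huL₀ hvL₀ huv (hpairC (Or.inl rfl)) (hpairC (Or.inr rfl))
  have hCsingΓ : IsSingular Ls C := clique_cl_singular hpp (pair_clique hcol)
  have hCclique : ∀ a ∈ C, ∀ b ∈ C, Col Ls a b := by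
    intro a ha b hb
    exact col_of_colIn (hCsingΓ.2 a ha b hb)
  have hCsingS : IsSingularIn Ls S C := singularIn_of_singular hSs hCsingΓ hCS
  -- 2-generation of C by any pair
  have hCgen : ∀ a ∈ C, ∀ b ∈ C, a ≠ b → C = Cl Ls {a, b} := by
    intro a ha b hb hab
    exact two_gen hpp hrk hS hCsingS hab ha hb
  -- external points have a unique neighbour in C
  have perpC : ∀ w ∈ S, (∃ c₀ ∈ C, ¬ Col Ls w c₀) →
      ∃! z, z ∈ C ∧ Col Ls w z := by
    intro w hw ⟨c₀, hc₀, hwc₀⟩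
    have hwC : w ∉ C := fun h => hwc₀ (hCclique w h c₀ hc₀)
    obtain ⟨z, hzL₀, hwz⟩ := symp_exists_nbr hpp hS hw hL₀
    refine ⟨z, ⟨hL₀C hzL₀, hwz⟩, ?_⟩
    -- uniqueness
    have huniq : ∀ z₁ z₂ : P, z₁ ∈ C → Col Ls w z₁ → z₂ ∈ C → Col Ls w z₂ → z₁ = z₂ := by
      intro z₁ z₂ hz₁ hwz₁ hz₂ hwz₂
      by_contra hne
      have hW : IsSubspace Ls (perp Ls w ∩ C) :=
        subspace_inter (perp_isSubspace hpp w) hCsub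
      have hWS : perp Ls w ∩ C ⊆ S := (Set.inter_subset_right).trans hCS
      have hWclique : Clique Ls (perp Ls w ∩ C) := fun a ha b hb =>
        hCclique a ha.2 b hb.2
      have hWsing : IsSingularIn Ls S (perp Ls w ∩ C) :=
        singularIn_of_singular hSs (singular_of_clique_subspace hW hWclique) hWS
      have h1 : perp Ls w ∩ C = Cl Ls {z₁, z₂} :=
        two_gen hpp hrk hS hWsing hne ⟨hwz₁, hz₁⟩ ⟨hwz₂, hz₂⟩
      have h2 : C = Cl Ls {z₁, z₂} := hCgen z₁ hz₁ z₂ hz₂ hne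
      have : c₀ ∈ perp Ls w ∩ C := by rw [h1, ← h2]; exact hc₀
      exact hwc₀ this.1
    intro z' hz'
    exact huniq z' z hz'.1 hz'.2 (hL₀C hzL₀) hwz
  -- the centre of an external point lies on every line of C
  have hcentre : ∀ w ∈ S, ∀ z : P, z ∈ C → Col Ls w z →
      (∀ c ∈ C, Col Ls w c → c = z) →
      ∀ N, N ∈ Ls → N ⊆ C → z ∈ N := by
    intro w hw z hzC hwz huni N hN hNC
    obtain ⟨n, hnN, hwn⟩ := symp_exists_nbr hpp hS hw ⟨hN, hNC.trans hCS⟩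
    have := huni n (hNC hnN) hwn
    rwa [← this]
  -- Suppose C is not equal to L₀
  by_cases hCL : C ⊆ L₀
  · have hCeq : C = L₀ := Set.Subset.antisymm hCL hL₀C
    show C ∈ Ls
    rw [hCeq]; exact hL₀.1
  exfalso
  obtain ⟨r₀, hr₀C, hr₀L₀⟩ := Set.not_subset.mp hCL
  -- w₁ : a point non-collinear with r₀; its unique neighbour z₁ in C
  obtain ⟨w₁, hw₁S, hw₁r₀'⟩ := symp_nondeg hpp hS (hCS hr₀C)
  have hw₁r₀ : ¬ Col Ls w₁ r₀ := fun h =>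
    (not_col_of_not_colIn hSs (hCS hr₀C) hw₁S hw₁r₀') (col_symm h)
  obtain ⟨z₁, ⟨hz₁C, hw₁z₁⟩, hz₁uni⟩ := perpC w₁ hw₁S ⟨r₀, hr₀C, hw₁r₀⟩
  -- w₂ : non-collinear with z₁; unique neighbour z₂
  obtain ⟨w₂, hw₂S, hw₂z₁'⟩ := symp_nondeg hpp hS (hCS hz₁C)
  have hw₂z₁ : ¬ Col Ls w₂ z₁ := fun h =>
    (not_col_of_not_colIn hSs (hCS hz₁C) hw₂S hw₂z₁') (col_symm h)
  obtain ⟨z₂, ⟨hz₂C, hw₂z₂⟩, hz₂uni⟩ := perpC w₂ hw₂S ⟨z₁, hz₁C, hw₂z₁⟩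
  have hz₂z₁ : z₂ ≠ z₁ := fun h => hw₂z₁ (h ▸ hw₂z₂)
  have hw₂C : w₂ ∉ C := fun h => hw₂z₁ (hCclique w₂ h z₁ hz₁C)
  have hw₂z₂ne : w₂ ≠ z₂ := fun h => hw₂C (h ▸ hz₂C)
  obtain ⟨T, hT, hw₂T, hz₂T⟩ := exists_line_of_col hSs hw₂S (hCS hz₂C) hw₂z₂ne hw₂z₂
  have hTC : ∀ c ∈ T, c ∈ C → c = z₂ := by
    intro c hcT hcC
    exact hz₂uni c ⟨hcC, Or.inr ⟨T, hT.1, hw₂T, hcT⟩⟩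
  -- all points of T other than z₂ are non-cones whose unique neighbour in C is z₂
  have tprop : ∀ t ∈ T, t ≠ z₂ →
      (∃ c ∈ C, ¬ Col Ls t c) ∧ (∀ c ∈ C, Col Ls t c → c = z₂) := by
    intro t htT htne
    have hnotcone : ∃ c ∈ C, ¬ Col Ls t c := by
      by_contra hcone
      push_neg at hcone
      have hz₁T : z₁ ∉ T := fun h => hz₂z₁ ((hTC z₁ h hz₁C) ▸ rfl)
      have h1 : Col Ls z₁ z₂ := hCclique z₁ hz₁C z₂ hz₂C
      have h2 : Col Ls z₁ t := col_symm (hcone z₁ hz₁C)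
      have hall := col_line_of_two hpp hT.1 hz₂T htT (Ne.symm htne) h1 h2
      exact hw₂z₁ (col_symm (hall w₂ hw₂T))
    refine ⟨hnotcone, ?_⟩
    intro c hcC htc
    obtain ⟨zt, ⟨hztC, htzt⟩, hztuni⟩ := perpC t (hT.2 htT) hnotcone
    have e1 : c = zt := hztuni c ⟨hcC, htc⟩
    have e2 : z₂ = zt := hztuni z₂ ⟨hz₂C, Or.inr ⟨T, hT.1, htT, hz₂T⟩⟩
    exact e1.trans e2.symm
  -- u₁ : non-collinear with z₂; its unique neighbour z₃
  obtain ⟨u₁, hu₁S, hu₁z₂'⟩ := symp_nondeg hpp hS (hCS hz₂C)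
  have hu₁z₂ : ¬ Col Ls u₁ z₂ := fun h =>
    (not_col_of_not_colIn hSs (hCS hz₂C) hu₁S hu₁z₂') (col_symm h)
  obtain ⟨z₃, ⟨hz₃C, hu₁z₃⟩, hz₃uni⟩ := perpC u₁ hu₁S ⟨z₂, hz₂C, hu₁z₂⟩
  have hz₃z₂ : z₃ ≠ z₂ := fun h => hu₁z₂ (h ▸ hu₁z₃)
  obtain ⟨ts, htsT, hu₁ts⟩ := symp_exists_nbr hpp hS hu₁S hT
  have htsz₂ : ts ≠ z₂ := fun h => hu₁z₂ (h ▸ hu₁ts)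
  obtain ⟨htsnotcone, htsperp⟩ := tprop ts htsT htsz₂
  have hu₁ts_ne : u₁ ≠ ts := by
    intro h
    exact hu₁z₂ (h ▸ (Or.inr ⟨T, hT.1, htsT, hz₂T⟩ : Col Ls ts z₂))
  obtain ⟨V, hV, hu₁V, htsV⟩ :=
    exists_line_of_col hSs hu₁S (hT.2 htsT) hu₁ts_ne hu₁ts
  have hVC : ∀ c ∈ V, c ∉ C := by
    intro c hcV hcC
    have h1 : c = z₃ := hz₃uni c ⟨hcC, Or.inr ⟨V, hV.1, hu₁V, hcV⟩⟩
    have h2 : c = z₂ := htsperp c hcC (Or.inr ⟨V, hV.1, htsV, hcV⟩)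
    exact hz₃z₂ (h1 ▸ h2)
  obtain ⟨vs, hvsV, hr₀vs⟩ := symp_exists_nbr hpp hS (hCS hr₀C) hV
  have hvscone : ∀ c ∈ C, Col Ls vs c := by
    by_contra hns
    push_neg at hns
    obtain ⟨c', hc'C, hnc'⟩ := hns
    obtain ⟨zv, ⟨hzvC, hvzv⟩, hzvuni⟩ := perpC vs (hV.2 hvsV) ⟨c', hc'C, hnc'⟩
    have hre : r₀ = zv := hzvuni r₀ ⟨hr₀C, col_symm hr₀vs⟩
    have : zv ∈ L₀ := hcentre vs (hV.2 hvsV) zv hzvC hvzv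
      (fun c hc hcol => hzvuni c ⟨hc, hcol⟩) L₀ hL₀.1 hL₀C
    exact hr₀L₀ (hre ▸ this)
  have hu₁vs : u₁ ≠ vs := fun h => hu₁z₂ (h ▸ hvscone z₂ hz₂C)
  have h1 : Col Ls z₃ u₁ := col_symm hu₁z₃
  have h2 : Col Ls z₃ vs := col_symm (hvscone z₃ hz₃C)
  have hall := col_line_of_two hpp hV.1 hu₁V hvsV hu₁vs h1 h2
  exact hz₃z₂ (htsperp z₃ hz₃C (col_symm (hall ts htsV)))

/-! ### Blocks -/

theorem col_of_block {B : Set P} (hB : IsBlock Ls B) {a c : P} (ha : a ∈ B)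
    (hc : c ∈ B) : Col Ls a c :=
  col_of_colIn (hB.1.2 a ha c hc)

/-- Every singular subspace extends to a block (Zorn). -/
theorem exists_block_above {T : Set P} (hT : IsSingular Ls T) :
    ∃ B, IsBlock Ls B ∧ T ⊆ B := by
  have hzorn := zorn_subset_nonempty {T' : Set P | IsSingular Ls T'} ?_ T hT
  · obtain ⟨M, hTM, hM⟩ := hzorn
    refine ⟨M, ⟨hM.prop, ?_⟩, hTM⟩
    intro T' hT' hMT'
    exact (hM.eq_of_subset hT' hMT').symm
  · intro c hcS hchain hcne
    refine ⟨⋃₀ c, ?_, fun s hs => Set.subset_sUnion_of_mem hs⟩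
    constructor
    · refine ⟨Set.subset_univ _, ?_⟩
      intro L hL a haL b hbL hab haT hbT
      obtain ⟨A, hAc, haA⟩ := haT
      obtain ⟨Bc, hBc, hbB⟩ := hbT
      rcases eq_or_ne A Bc with rfl | hne
      · exact ((hcS hAc).1.2 L hL a haL b hbL hab haA hbB).trans
          (Set.subset_sUnion_of_mem hAc)
      · rcases hchain hAc hBc hne with h | h
        · exact ((hcS hBc).1.2 L hL a haL b hbL hab (h haA) hbB).trans
            (Set.subset_sUnion_of_mem hBc)
        · exact ((hcS hAc).1.2 L hL a haL b hbL hab haA (h hbB)).trans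
            (Set.subset_sUnion_of_mem hAc)
    · intro a haT b hbT
      obtain ⟨A, hAc, haA⟩ := haT
      obtain ⟨Bc, hBc, hbB⟩ := hbT
      rcases eq_or_ne A Bc with rfl | hne
      · exact (hcS hAc).2 a haA b hbB
      · rcases hchain hAc hBc hne with h | h
        · exact (hcS hBc).2 a (h haA) b hbB
        · exact (hcS hAc).2 a haA b (h hbB)

/-- Two distinct blocks share at most one point. -/
theorem blocks_eq_of_two (hpp : StrongParapolar2 Ls) (hrk : SympRank Ls 2)
    {B B' : Set P} (hB : IsBlock Ls B) (hB' : IsBlock Ls B') {a c : P}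
    (haB : a ∈ B) (haB' : a ∈ B') (hcB : c ∈ B) (hcB' : c ∈ B') (hac : a ≠ c) :
    B = B' := by
  classical
  by_contra hne
  -- both differences are nonempty
  have hBB' : ¬ B ⊆ B' := fun h => hne (hB.2 B' hB'.1 h).symm
  have hB'B : ¬ B' ⊆ B := fun h => hne (hB'.2 B hB.1 h)
  obtain ⟨b, hbB, hbB'⟩ := Set.not_subset.mp hBB'
  -- find b' in B' \ B non-collinear with some b in B \ B'
  by_cases hallcol : ∀ p ∈ B, ∀ q ∈ B', Col Ls p q
  · -- then B ∪ B' is a clique, contradicting maximality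
    have hclique : Clique Ls (B ∪ B') := by
      intro p hp q hq
      rcases hp with hp | hp <;> rcases hq with hq | hq
      · exact col_of_block hB hp hq
      · exact hallcol p hp q hq
      · exact col_symm (hallcol q hq p hp)
      · exact col_of_block hB' hp hq
    have hsing := clique_cl_singular hpp hclique
    have h1 : Cl Ls (B ∪ B') = B :=
      hB.2 _ hsing ((Set.subset_union_left).trans (subset_cl Ls _))
    have h2 : B' ⊆ B := h1 ▸ ((Set.subset_union_right).trans (subset_cl Ls _))
    exact hB'B h2
  push_neg at hallcol
  obtain ⟨p, hpB, q, hqB', hpq⟩ := hallcol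
  -- p and q are non-collinear; a, c are common neighbours, so lie in ξ(p,q)
  obtain ⟨Sx, hsc, hsymp, _⟩ := exists_symp hpp hpq
  have haS : a ∈ Sx := convex_mem hsc.1 hsc.2.1 hsc.2.2.1 hpq
    (col_of_block hB hpB haB) (col_of_block hB' haB' hqB')
  have hcS : c ∈ Sx := convex_mem hsc.1 hsc.2.1 hsc.2.2.1 hpq
    (col_of_block hB hpB hcB) (col_of_block hB' hcB' hqB')
  have hpS : p ∈ Sx := hsc.2.1
  -- E := span of {a, c, p} is singular, inside Sx, contains a ≠ c
  have hclq : Clique Ls ({a, c, p} : Set P) :=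
    triple_clique (col_of_block hB haB hcB) (col_of_block hB haB hpB)
      (col_of_block hB hcB hpB)
  have hEsing : IsSingular Ls (Cl Ls {a, c, p}) := clique_cl_singular hpp hclq
  have hES : Cl Ls {a, c, p} ⊆ Sx := by
    refine cl_subset (symp_isSubspace hsymp) ?_
    intro t ht
    rcases ht with rfl | rfl | rfl
    · exact haS
    · exact hcS
    · exact hpS
  have hEin : IsSingularIn Ls Sx (Cl Ls {a, c, p}) :=
    singularIn_of_singular (symp_isSubspace hsymp) hEsing hES
  have hgen : Cl Ls {a, c, p} = Cl Ls {a, c} :=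
    two_gen hpp hrk hsymp hEin hac (subset_cl Ls _ (Or.inl rfl))
      (subset_cl Ls _ (Or.inr (Or.inl rfl)))
  have hpB' : p ∉ B' := fun h => hpq (col_of_block hB' h hqB')
  have hp_in : p ∈ Cl Ls {a, c} := hgen ▸ subset_cl Ls _ (Or.inr (Or.inr rfl))
  have : Cl Ls {a, c} ⊆ B' := by
    refine cl_subset hB'.1.1 ?_
    intro t ht
    rcases ht with rfl | rfl
    · exact haB'
    · exact hcB'
  exact hpB' (this hp_in)

/-! ### Main theorem -/

/-- Every symplecton is an ideal subquadrangle of the generalized quadrangle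
of blocks: any block through a point of a symplecton `H` meets `H` in a line
of `H`. -/
theorem symp_is_ideal_subquadrangle (Ls : Set (Set P))
    (hΓ : ImbrexGeometry Ls) (hrk : SympRank Ls 2)
    (H : Set P) (hH : IsSymp Ls H) (x : P) (hx : x ∈ H)
    (B : Set P) (hB : IsBlock Ls B) (hxB : x ∈ B) :
    LineIn Ls H (B ∩ H) := by
  classical
  have hpp := hΓ.spp
  have hHs : IsSubspace Ls H := symp_isSubspace hH
  have hHconv : IsConvex Ls H := by
    obtain ⟨x₀, y₀, _, hsc₀⟩ := hH
    exact hsc₀.1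
  have hBsub : IsSubspace Ls B := hB.1.1
  -- Step 1 : a second point of B ∩ H
  have hstep1 : ∃ p, (p ∈ B ∧ p ∈ H) ∧ p ≠ x := by
    by_contra hno
    push_neg at hno
    -- y : a point of H non-collinear with x
    obtain ⟨y, hyH, hxy'⟩ := symp_nondeg hpp hH hx
    have hxy : ¬ Col Ls x y := not_col_of_not_colIn hHs hx hyH hxy'
    have hyx : ¬ Col Ls y x := fun h => hxy (col_symm h)
    -- b : a point of B different from x
    obtain ⟨Λ₀, hΛ₀, hxΛ₀, u', hu'Λ₀, hu'x⟩ := exists_line_through hpp hrk hH hx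
    have hbex : ∃ b ∈ B, b ≠ x := by
      by_contra hB1
      push_neg at hB1
      have hxu' : Col Ls x u' := Or.inr ⟨Λ₀, hΛ₀.1, hxΛ₀, hu'Λ₀⟩
      have hsing : IsSingular Ls (Cl Ls {x, u'}) :=
        clique_cl_singular hpp (pair_clique hxu')
      have hsub : B ⊆ Cl Ls {x, u'} := by
        intro b hb
        rw [hB1 b hb]
        exact subset_cl Ls _ (Or.inl rfl)
      have heq := hB.2 _ hsing hsub
      have hu'B : u' ∈ B := heq ▸ subset_cl Ls ({x, u'} : Set P) (Or.inr rfl)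
      exact hu'x (hB1 u' hu'B)
    obtain ⟨b, hbB, hbx⟩ := hbex
    have hbH : b ∉ H := fun h => hbx (hno b ⟨hbB, h⟩)
    have hcxb : Col Ls x b := col_of_block hB hxB hbB
    obtain ⟨L, hL, hxL, hbL⟩ :=
      exists_line_of_col hBsub hxB hbB (Ne.symm hbx) hcxb
    -- y is opposite the line L
    have hyopp : ∀ t ∈ L, ¬ Col Ls y t := by
      intro t htL hyt
      have htB : t ∈ B := hL.2 htL
      have htx : Col Ls x t := col_of_block hB hxB htB
      rcases eq_or_ne t x with rfl | htxne
      · exact hxy (col_symm hyt)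
      · have htH : t ∈ H := hHconv.2 x hx y hyH hxy t htx (col_symm hyt)
        exact htxne (hno t ⟨htB, htH⟩)
    -- the two symplecta on y
    obtain ⟨S₁, hS₁sc, hS₁symp, _⟩ := exists_symp hpp hyx
    obtain ⟨S₂, hS₂sc, hS₂symp, _⟩ := exists_symp hpp (hyopp b hbL)
    obtain ⟨hmax1, hmax2⟩ :=
      hΓ.imb y L hL.1 hyopp x hxL b hbL (Ne.symm hbx) S₁ S₂ hS₁sc hS₂sc
    have hS₂s : IsSubspace Ls S₂ := symp_isSubspace hS₂symp
    have hyK : y ∈ S₁ ∩ S₂ := ⟨hS₁sc.2.1, hS₂sc.2.1⟩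
    have hS₁H : S₁ ⊆ H := hS₁sc.2.2.2 H hHconv hyH hx
    have hKsing₂ : IsSingularIn Ls S₂ (S₁ ∩ S₂) := hmax2.1
    -- K has a point other than y
    have h2nd : ∃ k', k' ∈ S₁ ∩ S₂ ∧ k' ≠ y := by
      by_contra hK1
      push_neg at hK1
      obtain ⟨Λy, hΛy, hyΛy, u₂, hu₂, hu₂y⟩ :=
        exists_line_through hpp hrk hS₂symp hS₂sc.2.1
      have hyu₂ : Col Ls y u₂ := Or.inr ⟨Λy, hΛy.1, hyΛy, hu₂⟩
      have hpairS₂ : ({y, u₂} : Set P) ⊆ S₂ := by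
        intro t ht
        rcases ht with rfl | rfl
        · exact hS₂sc.2.1
        · exact hΛy.2 hu₂
      have hcl : IsSingularIn Ls S₂ (Cl Ls {y, u₂}) :=
        singularIn_of_singular hS₂s
          (clique_cl_singular hpp (pair_clique hyu₂)) (cl_subset hS₂s hpairS₂)
      have hKsub : S₁ ∩ S₂ ⊆ Cl Ls {y, u₂} := by
        intro a ha
        rw [hK1 a ha]
        exact subset_cl Ls _ (Or.inl rfl)
      have heq := hmax2.2 _ hcl hKsub
      have : u₂ ∈ S₁ ∩ S₂ := heq ▸ subset_cl Ls ({y, u₂} : Set P) (Or.inr rfl)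
      exact hu₂y (hK1 u₂ this)
    obtain ⟨k', hk'K, hk'y⟩ := h2nd
    -- a line Λ through y and k' inside K
    have hyk'In : ColIn Ls S₂ y k' := hKsing₂.2 y hyK k' hk'K
    obtain ⟨Λ, hΛ, hyΛ, hk'Λ⟩ : ∃ Λ, LineIn Ls S₂ Λ ∧ y ∈ Λ ∧ k' ∈ Λ := by
      rcases hyk'In with h | ⟨Λ, hΛ, h1, h2⟩
      · exact absurd h.symm hk'y
      · exact ⟨Λ, hΛ, h1, h2⟩
    have hΛK : Λ ⊆ S₁ ∩ S₂ :=
      hKsing₂.1.2 Λ hΛ y hyΛ k' hk'Λ (Ne.symm hk'y) hyK hk'K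
    -- project b on Λ
    have hbS₂ : b ∈ S₂ := hS₂sc.2.2.1
    obtain ⟨k, hkΛ, hbk⟩ := symp_exists_nbr hpp hS₂symp hbS₂ hΛ
    have hkK : k ∈ S₁ ∩ S₂ := hΛK hkΛ
    have hkH : k ∈ H := hS₁H hkK.1
    have hky : Col Ls k y := col_of_colIn (hKsing₂.2 k hkK y hyK)
    have hkx : k ≠ x := fun h => hxy (h ▸ hky)
    have hkxcol : Col Ls k x := by
      by_contra hniet
      have : b ∈ H := hHconv.2 k hkH x hx hniet b (col_symm hbk)
        (col_symm hcxb)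
      exact hbH this
    -- {x, b, k} is a clique; extend to a block
    have hclq : Clique Ls ({x, b, k} : Set P) :=
      triple_clique hcxb (col_symm hkxcol) hbk
    obtain ⟨B₂, hB₂, hsubB₂⟩ := exists_block_above (clique_cl_singular hpp hclq)
    have hxB₂ : x ∈ B₂ := hsubB₂ (subset_cl Ls _ (Or.inl rfl))
    have hbB₂ : b ∈ B₂ := hsubB₂ (subset_cl Ls _ (Or.inr (Or.inl rfl)))
    have hkB₂ : k ∈ B₂ := hsubB₂ (subset_cl Ls _ (Or.inr (Or.inr rfl)))
    have heq : B = B₂ :=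
      blocks_eq_of_two hpp hrk hB hB₂ hxB hxB₂ hbB hbB₂ (Ne.symm hbx)
    have hkB : k ∈ B := heq ▸ hkB₂
    exact hkx (hno k ⟨hkB, hkH⟩)
  -- Step 2 : endgame
  obtain ⟨p, ⟨hpB, hpH⟩, hpx⟩ := hstep1
  have hBHsing : IsSingularIn Ls H (B ∩ H) := by
    constructor
    · refine ⟨Set.inter_subset_right, ?_⟩
      intro L hL a haL c hcL hacne haT hcT
      exact Set.subset_inter
        (line_subset hBsub hL.1 haL hcL hacne haT.1 hcT.1) hL.2
    · intro a ha c hc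
      exact colIn_of_col hHs ha.2 hc.2 (col_of_block hB ha.1 hc.1)
  have h2g : B ∩ H = Cl Ls {x, p} :=
    two_gen hpp hrk hH hBHsing (Ne.symm hpx) ⟨hxB, hx⟩ ⟨hpB, hpH⟩
  have hline : Cl Ls {x, p} ∈ Ls :=
    cl_pair_mem_lines hpp hrk hH hx hpH (Ne.symm hpx) (col_of_block hB hxB hpB)
  refine ⟨?_, Set.inter_subset_right⟩
  rw [h2g]
  exact hline
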